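/- arXiv:2108.07919 — 4 statements merged into one kernel-verified Lean document; each statement's English description precedes it below -/
import Mathlib

section
/- Let M_R = R^n, W a finite multiset of nonzero vectors, τ ∈ M_R with λ(τ) = 0, and r ≥ 0. Suppose χ ∈ rW (i.e. χ = Σ_{β∈W} a_β β + aτ with all a_β ∈ [−r,0]) and χ lies on F_r(λ), i.e. λ(χ) + r·λ(Σ_{λ(β)>0} β) = 0. Then in fact there exist coefficients c_β with c_β = 0 for λ(β) < 0, c_β = −r for λ(β) > 0, c_β ∈ [−r,0] for λ(β) = 0, and c ∈ R, such that χ = Σ_{β∈W} c_β β + cτ. -/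
open Finset

/-- The region rW = Σ_{β∈W} [−rβ, 0] + ℝτ ⊂ ℝ^n, where the finite multiset W is
given by the family `β : ι → ℝ^n`. -/
def regionW {n : ℕ} {ι : Type} [Fintype ι] (β : ι → (Fin n → ℝ)) (τ : Fin n → ℝ)
    (r : ℝ) : Set (Fin n → ℝ) :=
  {x | ∃ (a : ι → ℝ) (c : ℝ), (∀ i, a i ∈ Set.Icc (-r) 0) ∧
    x = (∑ i, a i • β i) + c • τ}

/-- Converse: if χ ∈ rW has r-invariant exactly r (χ ∉ sW for 0 ≤ s < r),
λ(τ) = 0, and χ lies on F_r(λ), i.e. λ(χ) + r·λ(N^{λ>0}) = 0, then χ admits an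
expansion χ = Σ c_β β + cτ with c_β = 0 for λ(β) < 0, c_β = −r for λ(β) > 0 and
c_β ∈ [−r,0] for λ(β) = 0. -/
theorem stmt4 (n : ℕ) (ι : Type) [Fintype ι] (β : ι → (Fin n → ℝ))
    (hβ : ∀ i, β i ≠ 0) (τ : Fin n → ℝ) (r : ℝ) (hr : 0 ≤ r)
    (lam : (Fin n → ℝ) →ₗ[ℝ] ℝ) (hτ : lam τ = 0)
    (χ : Fin n → ℝ) (hmem : χ ∈ regionW β τ r)
    (hmin : ∀ s, 0 ≤ s → s < r → χ ∉ regionW β τ s)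
    (hface : lam χ + r * lam (∑ i, if 0 < lam (β i) then β i else 0) = 0) :
    ∃ (c : ι → ℝ) (c0 : ℝ),
      (∀ i, lam (β i) < 0 → c i = 0) ∧
      (∀ i, 0 < lam (β i) → c i = -r) ∧
      (∀ i, lam (β i) = 0 → c i ∈ Set.Icc (-r) 0) ∧
      χ = (∑ i, c i • β i) + c0 • τ := by
  obtain ⟨a, c0, ha, hx⟩ := hmem
  -- pointwise lower bound
  set g : ι → ℝ := fun i => if 0 < lam (β i) then -r * lam (β i) else 0 with hg
  have hle : ∀ i ∈ Finset.univ (α := ι), g i ≤ a i * lam (β i) := by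
    intro i _
    obtain ⟨h1, h2⟩ := ha i
    by_cases h : 0 < lam (β i)
    · simp only [hg, if_pos h]
      exact mul_le_mul_of_nonneg_right h1 h.le
    · simp only [hg, if_neg h]
      push_neg at h
      nlinarith
  have hlamχ : lam χ = ∑ i, a i * lam (β i) := by
    rw [hx]
    simp [map_sum, hτ, mul_comm]
  have hsum : ∑ i, g i = ∑ i, a i * lam (β i) := by
    have : lam (∑ i, if 0 < lam (β i) then β i else 0)
        = ∑ i, if 0 < lam (β i) then lam (β i) else 0 := by
      rw [map_sum]
      congr 1; funext i
      split <;> simp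
    rw [← hlamχ]
    have hface' : lam χ = -(r * ∑ i, if 0 < lam (β i) then lam (β i) else 0) := by
      rw [this] at hface; linarith
    rw [hface', Finset.mul_sum, ← Finset.sum_neg_distrib]
    congr 1; funext i
    simp only [hg]
    split <;> ring
  have heq : ∀ i ∈ Finset.univ (α := ι), g i = a i * lam (β i) :=
    (Finset.sum_eq_sum_iff_of_le hle).mp hsum
  refine ⟨a, c0, ?_, ?_, fun i _ => ha i, hx⟩
  · intro i hi
    have := heq i (Finset.mem_univ i)
    simp only [hg, if_neg (not_lt.mpr hi.le)] at this
    have h0 : a i * lam (β i) = 0 * lam (β i) := by linarith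
    exact mul_right_cancel₀ hi.ne h0
  · intro i hi
    have := heq i (Finset.mem_univ i)
    simp only [hg, if_pos hi] at this
    exact (mul_right_cancel₀ hi.ne' this.symm)
end

section
/- Let M_R = R^n, W a finite multiset of nonzero vectors, τ ∈ M_R, and let r ≥ 1/2. Let χ ∈ M_R with r-invariant equal to r (the smallest s ≥ 0 with χ ∈ sW). Suppose there is a subset J ⊂ W and a vector ψ = Σ_{β∈W∖J} d_β β with all d_β ∈ [0, r), such that χ = −r·Σ_{β∈J} β − ψ. If λ is a linear functional with λ(τ)=0 such that χ ∈ F_r(λ)^{int} (χ lies on F_r(λ) but on no F_r(μ) for μ > λ), then {β ∈ W : λ(β) > 0} ⊆ J. -/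
open Finset

/-- The face F_r(λ) = H_r(λ) ∩ rW, where H_r(λ) is the hyperplane
λ(ψ) + r·λ(N^{λ>0}) = 0 with N^{λ>0} = Σ_{λ(β)>0} β. -/
def faceF {n : ℕ} {ι : Type} [Fintype ι] (β : ι → (Fin n → ℝ)) (τ : Fin n → ℝ)
    (r : ℝ) (lam : (Fin n → ℝ) →ₗ[ℝ] ℝ) : Set (Fin n → ℝ) :=
  {x | x ∈ regionW β τ r ∧
    lam x + r * lam (∑ i, if 0 < lam (β i) then β i else 0) = 0}

/-- The partial order on linear functionals relative to W:
μ ≥ λ iff every β ∈ W with λ(β) > 0 has μ(β) > 0. -/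
def ordGE {n : ℕ} {ι : Type} (β : ι → (Fin n → ℝ))
    (lam mu : (Fin n → ℝ) →ₗ[ℝ] ℝ) : Prop :=
  ∀ i, 0 < lam (β i) → 0 < mu (β i)

/-- If r ≥ 1/2, χ has r-invariant exactly r and χ = −r·Σ_{β∈J} β − ψ with
ψ = Σ_{β∈W∖J} d_β β, d_β ∈ [0,r), and χ lies in the relative interior
F_r(λ)^{int} (i.e. on F_r(λ) but on no F_r(μ) with μ > λ), then
{β ∈ W : λ(β) > 0} ⊆ J. -/
theorem stmt5 (n : ℕ) (ι : Type) [Fintype ι] [DecidableEq ι]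
    (β : ι → (Fin n → ℝ)) (hβ : ∀ i, β i ≠ 0) (τ : Fin n → ℝ)
    (r : ℝ) (hr : (1 : ℝ) / 2 ≤ r)
    (χ : Fin n → ℝ) (hmem : χ ∈ regionW β τ r)
    (hmin : ∀ s, 0 ≤ s → s < r → χ ∉ regionW β τ s)
    (J : Finset ι) (dcoef : ι → ℝ) (hd : ∀ i ∉ J, dcoef i ∈ Set.Ico 0 r)
    (hχ : χ = -(r • ∑ i ∈ J, β i) - ∑ i ∈ Finset.univ \ J, dcoef i • β i)
    (lam : (Fin n → ℝ) →ₗ[ℝ] ℝ) (hlamτ : lam τ = 0)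
    (hface : χ ∈ faceF β τ r lam)
    (hint : ∀ mu : (Fin n → ℝ) →ₗ[ℝ] ℝ, mu τ = 0 →
      ordGE β lam mu → ¬ ordGE β mu lam → χ ∉ faceF β τ r mu) :
    ∀ i, 0 < lam (β i) → i ∈ J := by
  intro i0 hi0
  by_contra hJ
  classical
  have hr0 : (0:ℝ) < r := lt_of_lt_of_le (by norm_num) hr
  set g : ι → ℝ := fun i =>
    (if i ∈ J then -r else -dcoef i) * lam (β i)
      + r * (if 0 < lam (β i) then lam (β i) else 0) with hg
  have key : ∑ i, g i
      = lam χ + r * lam (∑ i, if 0 < lam (β i) then β i else 0) := by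
    rw [hχ]
    simp only [map_sub, map_neg, map_smul, map_sum, smul_eq_mul, apply_ite lam,
      map_zero, hg]
    rw [Finset.sum_add_distrib, ← Finset.mul_sum]
    have h1 : ∑ i : ι, (if i ∈ J then -r else -dcoef i) * lam (β i)
        = (∑ i ∈ Finset.univ \ J, -(dcoef i * lam (β i)))
          + ∑ i ∈ J, -(r * lam (β i)) := by
      rw [← Finset.sum_sdiff (Finset.subset_univ J)]
      congr 1
      · exact Finset.sum_congr rfl fun i hi => by
          rw [if_neg (Finset.mem_sdiff.mp hi).2]; ring
      · exact Finset.sum_congr rfl fun i hi => by rw [if_pos hi]; ring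
    rw [h1, Finset.sum_neg_distrib, Finset.sum_neg_distrib, ← Finset.mul_sum]
    ring
  have hsum : ∑ i, g i = 0 := by rw [key]; exact hface.2
  have hnn : ∀ i ∈ Finset.univ, 0 ≤ g i := by
    intro i _
    rw [hg]
    dsimp only
    by_cases hiJ : i ∈ J
    · rw [if_pos hiJ]
      by_cases hpos : 0 < lam (β i)
      · rw [if_pos hpos]; nlinarith
      · rw [if_neg hpos]; push_neg at hpos; nlinarith
    · rw [if_neg hiJ]
      obtain ⟨hd0, hdr⟩ := hd i hiJ
      by_cases hpos : 0 < lam (β i)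
      · rw [if_pos hpos]; nlinarith
      · rw [if_neg hpos]; push_neg at hpos; nlinarith
  have hz : g i0 = 0 :=
    (Finset.sum_eq_zero_iff_of_nonneg hnn).mp hsum i0 (Finset.mem_univ i0)
  rw [hg] at hz
  dsimp only at hz
  rw [if_neg hJ, if_pos hi0] at hz
  obtain ⟨hd0, hdr⟩ := hd i0 hJ
  nlinarith
end

section
/- Let W be a finite multiset of nonzero vectors in R^n that is symmetric (for each β ∈ W, −β is also in W with the same multiplicity), let τ ∈ R^n, and r ≥ 1/2. Let χ ∈ R^n with χ ∈ rW written as χ = Σ_{β∈W} c_β β + cτ where c_β = 0 for λ(β) < 0, c_β = −r for λ(β) > 0, c_β ∈ (−r, 0] for λ(β) = 0, for some linear functional λ with λ(τ)=0. Let I be any subset of {β ∈ W : λ(β) < 0} and σ_I = Σ_{β∈I} β. Then χ − σ_I ∈ rW. -/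
open Finset

/-- Let W be a symmetric finite multiset of nonzero vectors (witnessed by an
involution-like permutation σ with β(σ i) = −β i), r ≥ 1/2, and let
χ = Σ c_β β + cτ ∈ rW with c_β = 0 for λ(β) < 0, c_β = −r for λ(β) > 0 and
c_β ∈ (−r, 0] for λ(β) = 0.  Then for any subset I of {β : λ(β) < 0}, with
σ_I = Σ_{β∈I} β, we have χ − σ_I ∈ rW. -/
theorem stmt6 (n : ℕ) (ι : Type) [Fintype ι] [DecidableEq ι]
    (β : ι → (Fin n → ℝ)) (hβ : ∀ i, β i ≠ 0)
    (σ : Equiv.Perm ι) (hσ : ∀ i, β (σ i) = -β i)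
    (τ : Fin n → ℝ) (r : ℝ) (hr : (1 : ℝ) / 2 ≤ r)
    (lam : (Fin n → ℝ) →ₗ[ℝ] ℝ) (hτ : lam τ = 0)
    (c : ι → ℝ) (c0 : ℝ)
    (h0 : ∀ i, lam (β i) < 0 → c i = 0)
    (h1 : ∀ i, 0 < lam (β i) → c i = -r)
    (h2 : ∀ i, lam (β i) = 0 → c i ∈ Set.Ioc (-r) 0)
    (χ : Fin n → ℝ) (hχ : χ = (∑ i, c i • β i) + c0 • τ)
    (I : Finset ι) (hI : ∀ i ∈ I, lam (β i) < 0) :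
    χ - ∑ i ∈ I, β i ∈ regionW β τ r := by
  classical
  have hdisj : Disjoint I (I.image σ) := by
    rw [Finset.disjoint_left]
    rintro j hj hj'
    obtain ⟨i, hi, rfl⟩ := Finset.mem_image.mp hj'
    have ha := hI i hi
    have hb := hI (σ i) hj
    rw [hσ i, map_neg] at hb
    linarith
  set a : ι → ℝ := fun j => if j ∈ I then -(min 1 r) else
    if j ∈ I.image σ then max (1 - 2*r) (-r) else c j with ha
  have hcmem : ∀ j, c j ∈ Set.Icc (-r) 0 := by
    intro j
    rcases lt_trichotomy (lam (β j)) 0 with h | h | h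
    · rw [h0 j h]; constructor <;> linarith
    · have := h2 j h
      exact ⟨le_of_lt this.1, this.2⟩
    · rw [h1 j h]; constructor <;> linarith
  refine ⟨a, c0, ?_, ?_⟩
  · intro j
    simp only [ha]
    split_ifs with h h'
    · constructor
      · simp only [neg_le_neg_iff]; exact min_le_right _ _
      · simp only [neg_nonpos]; positivity
    · constructor
      · exact le_max_right _ _
      · apply max_le <;> linarith
    · exact hcmem j
  · rw [hχ]
    have key : ∑ j, a j • β j = (∑ j, c j • β j) - ∑ i ∈ I, β i := by
      have hd : ∑ j, (a j - c j) • β j = - ∑ i ∈ I, β i := by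
        have hsub : ∑ j, (a j - c j) • β j
            = ∑ j ∈ I ∪ I.image σ, (a j - c j) • β j := by
          rw [eq_comm]
          apply Finset.sum_subset (Finset.subset_univ _)
          intro j _ hj
          rw [Finset.mem_union, not_or] at hj
          simp only [ha, if_neg hj.1, if_neg hj.2, sub_self, zero_smul]
        rw [hsub, Finset.sum_union hdisj, Finset.sum_image
          (fun x _ y _ h => σ.injective h)]
        have e1 : ∀ j ∈ I, (a j - c j) • β j = (-(min 1 r)) • β j := by
          intro j hj
          rw [ha]
          simp only [if_pos hj, h0 j (hI j hj), sub_zero]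
        have e2 : ∀ j ∈ I, (a (σ j) - c (σ j)) • β (σ j)
            = -((1 - min 1 r) • β j) := by
          intro j hj
          have hσj : σ j ∉ I := Finset.disjoint_left.mp hdisj.symm
            (Finset.mem_image_of_mem σ hj)
          have hlam : 0 < lam (β (σ j)) := by
            rw [hσ j, map_neg]; linarith [hI j hj]
          rw [ha]
          simp only [if_neg hσj, if_pos (Finset.mem_image_of_mem σ hj),
            h1 (σ j) hlam, hσ j, smul_neg]
          congr 2
          rcases le_total r 1 with h | h
          · rw [max_eq_left (by linarith), min_eq_right h]; ring
          · rw [max_eq_right (by linarith), min_eq_left h]; ring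
        rw [Finset.sum_congr rfl e1, Finset.sum_congr rfl e2,
          ← Finset.sum_add_distrib, ← Finset.sum_neg_distrib]
        apply Finset.sum_congr rfl
        intro j hj
        have hm : -(min 1 r) + -(1 - min 1 r) = -1 := by ring
        rw [← neg_smul (1 - min 1 r), ← add_smul, hm, neg_one_smul]
      simp only [sub_smul, Finset.sum_sub_distrib] at hd
      have := sub_eq_iff_eq_add.mp hd
      rw [this]; abel
    rw [key]; abel
end

section
/- Fix e, f ≥ 1 and a symmetric multiset of weights, and let N_{e,f} = Σ_{β : λ_{e,f}(β) < 0} β, ρ_{e,f} = half the sum of positive roots α with λ_{e,f}(α) < 0, and L_{e,f} = N_{e,f} − 2ρ_{e,f}, with N_{f,e}, ρ_{f,e}, L_{f,e} defined symmetrically. Let w_{e,f} be the block-swap permutation (i ↦ i+f for i ≤ e, i ↦ i−e for i > e) and let δ be a Weyl-invariant weight. Then for any real r and χ_A := r·N_{e,f} − ρ_{e,f} − δ, one has w_{e,f}(χ_A) + L_{f,e} = (1−r)·N_{f,e} − ρ_{f,e} − δ. In particular, the transformation χ ↦ w_{e,f}(χ) + L_{f,e} followed by the analogous transformation with e and f swapped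 is the identity on weights of the form r·N_{e,f} − ρ_{e,f} − δ. -/
open Finset

/-- Standard basis weight β_i, as a vector in ℝ^n. -/
noncomputable def basisVecR (n : ℕ) (i : Fin n) : Fin n → ℝ := Pi.single i 1

/-- N at the split s, with multiplicity g: the sum (with multiplicity g) of the
weights β_b − β_a with a < s ≤ b, i.e. the weights β with λ(β) < 0 for the
antidominant cocharacter λ which is 0 on the first s coordinates and −1 on the
rest. -/
noncomputable def Nsplit (n s g : ℕ) : Fin n → ℝ :=
  (g : ℝ) • ∑ p ∈ Finset.univ.filter
      (fun p : Fin n × Fin n => (p.1 : ℕ) < s ∧ s ≤ (p.2 : ℕ)),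
    (basisVecR n p.2 - basisVecR n p.1)

/-- ρ at the split s: half the sum of the positive roots α with λ(α) < 0. -/
noncomputable def rhosplit (n s : ℕ) : Fin n → ℝ :=
  (1 / 2 : ℝ) • ∑ p ∈ Finset.univ.filter
      (fun p : Fin n × Fin n => (p.1 : ℕ) < s ∧ s ≤ (p.2 : ℕ)),
    (basisVecR n p.2 - basisVecR n p.1)

/-- L = N − 2ρ at the split s. -/
noncomputable def Lsplit (n s g : ℕ) : Fin n → ℝ :=
  Nsplit n s g - (2 : ℝ) • rhosplit n s

/-- The block-swap permutation w_{e,f} : i ↦ i+f for i < e, i ↦ i−e for e ≤ i. -/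
def wEF (e f : ℕ) : Fin (e + f) → Fin (e + f) := fun i =>
  if h : (i : ℕ) < e then ⟨(i : ℕ) + f, by omega⟩
  else ⟨(i : ℕ) - e, by have := i.isLt; omega⟩

/-- Its inverse w_{f,e} : i ↦ i+e for i < f, i ↦ i−f for f ≤ i. -/
def wFE (e f : ℕ) : Fin (e + f) → Fin (e + f) := fun i =>
  if h : (i : ℕ) < f then ⟨(i : ℕ) + e, by omega⟩
  else ⟨(i : ℕ) - f, by have := i.isLt; omega⟩

lemma cardA (n s : ℕ) (hs : s ≤ n) :
    #(Finset.univ.filter fun a : Fin n => (a : ℕ) < s) = s := by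
  rw [Finset.card_filter, Fin.sum_univ_eq_sum_range (fun i => if i < s then 1 else 0),
    ← Finset.card_filter]
  have : (Finset.range n).filter (· < s) = Finset.range s := by
    ext i; simp; omega
  rw [this, Finset.card_range]

lemma cardB (n s : ℕ) :
    #(Finset.univ.filter fun b : Fin n => s ≤ (b : ℕ)) = n - s := by
  rw [Finset.card_filter, Fin.sum_univ_eq_sum_range (fun i => if s ≤ i then 1 else 0),
    ← Finset.card_filter]
  have : (Finset.range n).filter (s ≤ ·) = Finset.Ico s n := by
    ext i; simp [Finset.mem_Ico]; omega
  rw [this, Nat.card_Ico]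

lemma sum_split_apply (n s : ℕ) (hs : s ≤ n) (k : Fin n) :
    (∑ p ∈ Finset.univ.filter
        (fun p : Fin n × Fin n => (p.1 : ℕ) < s ∧ s ≤ (p.2 : ℕ)),
      (basisVecR n p.2 - basisVecR n p.1)) k
    = if (k : ℕ) < s then (s : ℝ) - n else (s : ℝ) := by
  classical
  have hF : Finset.univ.filter
        (fun p : Fin n × Fin n => (p.1 : ℕ) < s ∧ s ≤ (p.2 : ℕ))
      = (Finset.univ.filter fun a : Fin n => (a : ℕ) < s) ×ˢ
        (Finset.univ.filter fun b : Fin n => s ≤ (b : ℕ)) := by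
    rw [← Finset.filter_product, Finset.univ_product_univ]
  rw [Finset.sum_apply, hF, Finset.sum_product]
  simp only [basisVecR, Pi.sub_apply, Pi.single_apply, Finset.sum_sub_distrib,
    Finset.sum_ite_eq, Finset.sum_const, Finset.mem_filter, Finset.mem_univ,
    true_and, cardA n s hs, cardB n s]
  by_cases hk : (k : ℕ) < s
  · simp [hk, not_le.mpr hk]
    push_cast [Nat.cast_sub hs]
    ring
  · simp [hk, not_lt.mp hk]

lemma Nsplit_apply (n s g : ℕ) (hs : s ≤ n) (k : Fin n) :
    Nsplit n s g k = (g : ℝ) * (if (k : ℕ) < s then (s : ℝ) - n else (s : ℝ)) := by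
  unfold Nsplit
  rw [Pi.smul_apply, sum_split_apply n s hs k, smul_eq_mul]

lemma rhosplit_apply (n s : ℕ) (hs : s ≤ n) (k : Fin n) :
    rhosplit n s k = (1 / 2 : ℝ) * (if (k : ℕ) < s then (s : ℝ) - n else (s : ℝ)) := by
  unfold rhosplit
  rw [Pi.smul_apply, sum_split_apply n s hs k, smul_eq_mul]

lemma Lsplit_apply (n s g : ℕ) (hs : s ≤ n) (k : Fin n) :
    Lsplit n s g k = ((g : ℝ) - 1) * (if (k : ℕ) < s then (s : ℝ) - n else (s : ℝ)) := by
  unfold Lsplit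
  rw [Pi.sub_apply, Pi.smul_apply, Nsplit_apply n s g hs k, rhosplit_apply n s hs k,
    smul_eq_mul]
  ring

/-- For χ_A = r·N_{e,f} − ρ_{e,f} − δ with δ Weyl-invariant, one has
w_{e,f}(χ_A) + L_{f,e} = (1−r)·N_{f,e} − ρ_{f,e} − δ (where a permutation w
acts on weights by (w·χ)(k) = χ(w⁻¹ k), and w_{e,f}⁻¹ = w_{f,e}); in
particular applying the transformation χ ↦ w_{e,f}(χ) + L_{f,e} and then the
analogous transformation with e and f swapped is the identity on such
weights. -/
theorem stmt13 (e f g : ℕ) (he : 1 ≤ e) (hf : 1 ≤ f) (hg : 1 ≤ g)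
    (δ : Fin (e + f) → ℝ) (hδ : ∀ i j, δ i = δ j) (r : ℝ) :
    ((fun k => (r • Nsplit (e + f) e g - rhosplit (e + f) e - δ) (wFE e f k))
        + Lsplit (e + f) f g
      = (1 - r) • Nsplit (e + f) f g - rhosplit (e + f) f - δ)
    ∧ ((fun k =>
          ((fun k' => (r • Nsplit (e + f) e g - rhosplit (e + f) e - δ)
              (wFE e f k')) + Lsplit (e + f) f g) (wEF e f k))
        + Lsplit (e + f) e g
      = r • Nsplit (e + f) e g - rhosplit (e + f) e - δ) := by
  have he' : e ≤ e + f := by omega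
  have hf' : f ≤ e + f := by omega
  constructor
  · funext k
    have hδk : δ (wFE e f k) = δ k := hδ _ _
    simp only [Pi.add_apply, Pi.sub_apply, Pi.smul_apply, smul_eq_mul,
      Nsplit_apply _ _ _ he', Nsplit_apply _ _ _ hf',
      rhosplit_apply _ _ he', rhosplit_apply _ _ hf',
      Lsplit_apply _ _ _ hf', hδk]
    rcases lt_or_ge (k : ℕ) f with hk | hk
    · have h1 : ((wFE e f k : Fin (e + f)) : ℕ) = (k : ℕ) + e := by simp [wFE, hk]
      have h2 : ¬ ((k : ℕ) + e < e) := by omega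
      rw [h1]
      simp only [if_pos hk, if_neg h2]
      push_cast
      ring
    · have h1 : ((wFE e f k : Fin (e + f)) : ℕ) = (k : ℕ) - f := by
        simp [wFE, not_lt.mpr hk]
      have h2 : (k : ℕ) - f < e := by have := k.isLt; omega
      rw [h1]
      simp only [if_pos h2, if_neg (not_lt.mpr hk)]
      push_cast
      ring
  · funext k
    have hcomp : wFE e f (wEF e f k) = k := by
      apply Fin.ext
      have := k.isLt
      rcases lt_or_ge (k : ℕ) e with hk | hk
      · have h1 : ((wEF e f k : Fin (e + f)) : ℕ) = (k : ℕ) + f := by simp [wEF, hk]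
        simp [wFE, h1] <;> omega
      · have h1 : ((wEF e f k : Fin (e + f)) : ℕ) = (k : ℕ) - e := by
          simp [wEF, not_lt.mpr hk]
        have h2 : (k : ℕ) - e < f := by omega
        simp [wFE, h1, h2] <;> omega
    simp only [Pi.add_apply, Pi.sub_apply, Pi.smul_apply, smul_eq_mul, hcomp]
    have hL : Lsplit (e + f) f g (wEF e f k) + Lsplit (e + f) e g k = 0 := by
      rw [Lsplit_apply _ _ _ hf', Lsplit_apply _ _ _ he']
      rcases lt_or_ge (k : ℕ) e with hk | hk
      · have h1 : ((wEF e f k : Fin (e + f)) : ℕ) = (k : ℕ) + f := by simp [wEF, hk]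
        have h2 : ¬ ((k : ℕ) + f < f) := by omega
        rw [h1]
        simp only [if_neg h2, if_pos hk]
        push_cast
        ring
      · have h1 : ((wEF e f k : Fin (e + f)) : ℕ) = (k : ℕ) - e := by
          simp [wEF, not_lt.mpr hk]
        have h2 : (k : ℕ) - e < f := by have := k.isLt; omega
        rw [h1]
        simp only [if_pos h2, if_neg (not_lt.mpr hk)]
        push_cast
        ring
    linarith [hL]
end
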